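/- Lemma B.6 (pointwise comparison of gap functions). Let C = max{64·β²·R₁²·R₂², 2}. Then for all loss parameters r₁, r₁′, r₂, r₂′ : 𝒜 → ℋ (each with all norms at most R₁) and all (x,y) ∈ 𝒳×𝒴: |g_{r₁,r₁′}(x,y) − g_{r₂,r₂′}(x,y)|² ≤ C·( Σ_{a∈𝒜} ⟨r₁′(a) − r₂′(a), p(x)⟩² + Σ_{a∈𝒜} ⟨r₁(a) − r₂(a), φ(y) − p(x)⟩² ). -/

import Mathlib

/-!
Write `w₁, w₂` for the softmax weights `k̃_{r₁'}(x, ·)`, `k̃_{r₂'}(x, ·)` and `S₁, S₂` for the two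
sums of squares on the right. Then
`g_{r₁,r₁'} - g_{r₂,r₂'} = ∑ₐ w₁ a ⟪r₁ a - r₂ a, φ y - p x⟫ + ∑ₐ ⟪r₂ a, φ y - p x⟫ (w₁ a - w₂ a)`.
The first sum is an average, so its square is at most `S₂`. For the second, the log-weights of
`w₁` and `w₂` differ by `β⟪r₁' a - r₂' a, p x⟫`, whose oscillation over `a` is at most
`D = √(2 S₁)`; hence `w₁, w₂` agree up to a factor `e^{±βD}` and their total
variation distance is at most `2βD`. Since `|⟪r₂ a, φ y - p x⟫| ≤ 2R₁R₂`, the claim follows from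
`(s + t)² ≤ 2s² + 2t²`.
-/

open MeasureTheory RealInnerProductSpace

/-- The gap function `g_{r,r'}(x,y) = ∑ₐ ⟪r a, φ y - p x⟫ · k̃_{r'}(x,a)`, where
`k̃_{r'}` is the smooth optimal decision rule induced by the loss estimator
`f_p(x,a) = ⟪r' a, p x⟫` with temperature `β`. -/
noncomputable def gap {X Y A H : Type*} [Fintype A]
    [NormedAddCommGroup H] [InnerProductSpace ℝ H]
    (β : ℝ) (φ : Y → H) (p : X → H) (r r' : A → H) (z : X × Y) : ℝ :=
  ∑ a, ⟪r a, φ z.2 - p z.1⟫ *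
    (Real.exp (-β * ⟪r' a, p z.1⟫) / ∑ a', Real.exp (-β * ⟪r' a', p z.1⟫))

open Finset Real

noncomputable def softmax {A : Type*} [Fintype A] (u : A → ℝ) (a : A) : ℝ :=
  exp (u a) / ∑ b, exp (u b)

section Softmax

variable {A : Type*} [Fintype A] [Nonempty A]

lemma sum_exp_pos (u : A → ℝ) : 0 < ∑ b, exp (u b) :=
  sum_pos (fun b _ => exp_pos (u b)) univ_nonempty

lemma softmax_mem_stdSimplex (u : A → ℝ) : softmax u ∈ stdSimplex ℝ A :=
  ⟨fun a => div_nonneg (exp_pos _).le (sum_exp_pos u).le, by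
    simp only [softmax, ← sum_div, div_self (sum_exp_pos u).ne']⟩

lemma exp_neg_mul_softmax_le (u v : A → ℝ) {D : ℝ}
    (h : ∀ a b, (u b - v b) - (u a - v a) ≤ D) (a : A) :
    exp (-D) * softmax v a ≤ softmax u a := by
  rw [softmax, softmax, ← mul_div_assoc, div_le_div_iff₀ (sum_exp_pos v) (sum_exp_pos u),
    mul_sum, mul_sum]
  refine sum_le_sum fun b _ => ?_
  rw [← exp_add, ← exp_add, ← exp_add, exp_le_exp]
  linarith [h a b]

lemma sum_abs_softmax_sub_le (u v : A → ℝ) {D : ℝ}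
    (h : ∀ a b, (u a - v a) - (u b - v b) ≤ D) :
    ∑ a, |softmax u a - softmax v a| ≤ 2 * D := by
  obtain ⟨hu₀, hu₁⟩ := softmax_mem_stdSimplex u
  obtain ⟨hv₀, hv₁⟩ := softmax_mem_stdSimplex v
  have hD : 0 ≤ D := by simpa using h (Classical.arbitrary A) (Classical.arbitrary A)
  have huv := exp_neg_mul_softmax_le u v (fun a b => h b a)
  have hvu := exp_neg_mul_softmax_le v u (D := D) (fun a b => by linarith [h a b])
  have hexp_le_one : exp (-D) ≤ 1 := exp_le_one_iff.2 (neg_nonpos.2 hD)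
  have habs : ∀ a, |softmax u a - softmax v a| ≤ (1 - exp (-D)) * (softmax u a + softmax v a) :=
    fun a => abs_sub_le_iff.2
      ⟨by nlinarith [hvu a, hu₀ a, hv₀ a], by nlinarith [huv a, hu₀ a, hv₀ a]⟩
  calc ∑ a, |softmax u a - softmax v a|
      ≤ ∑ a, (1 - exp (-D)) * (softmax u a + softmax v a) := sum_le_sum fun a _ => habs a
    _ = 2 * (1 - exp (-D)) := by rw [← mul_sum, sum_add_distrib, hu₁, hv₁]; ring
    _ ≤ 2 * D := by linarith [add_one_le_exp (-D)]

end Softmax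

section Sums

variable {ι : Type*} [Fintype ι]

lemma sq_sum_mul_le_sum_sq {w : ι → ℝ} (hw : w ∈ stdSimplex ℝ ι) (c : ι → ℝ) :
    (∑ i, w i * c i) ^ 2 ≤ ∑ i, c i ^ 2 := by
  have hw_le_one : ∀ i, w i ≤ 1 := fun i =>
    hw.2 ▸ single_le_sum (fun j _ => hw.1 j) (mem_univ i)
  have hw_sq : ∑ i, w i ^ 2 ≤ 1 := hw.2 ▸
    sum_le_sum fun i _ => by nlinarith [hw.1 i, hw_le_one i]
  calc (∑ i, w i * c i) ^ 2 ≤ (∑ i, w i ^ 2) * ∑ i, c i ^ 2 := sum_mul_sq_le_sq_mul_sq _ _ _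
    _ ≤ ∑ i, c i ^ 2 := mul_le_of_le_one_left (sum_nonneg fun i _ => sq_nonneg _) hw_sq

lemma sub_le_sqrt_two_mul_sum_sq (s : ι → ℝ) (i j : ι) :
    s i - s j ≤ √(2 * ∑ k, s k ^ 2) := by
  classical
  refine (le_abs_self _).trans (abs_le_sqrt ?_)
  rcases eq_or_ne i j with rfl | hij
  · simpa using sum_nonneg fun k _ => sq_nonneg (s k)
  · have hpair : s i ^ 2 + s j ^ 2 ≤ ∑ k, s k ^ 2 := by
      rw [← sum_pair (f := fun k => s k ^ 2) hij]
      exact sum_le_sum_of_subset_of_nonneg (subset_univ _) fun k _ _ => sq_nonneg (s k)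
    nlinarith [sq_nonneg (s i + s j)]

lemma abs_sum_mul_le {c : ι → ℝ} {M : ℝ} (hc : ∀ i, |c i| ≤ M) (w : ι → ℝ) :
    |∑ i, c i * w i| ≤ M * ∑ i, |w i| := by
  rw [mul_sum]
  refine (abs_sum_le_sum_abs _ _).trans (sum_le_sum fun i _ => ?_)
  rw [abs_mul]
  exact mul_le_mul_of_nonneg_right (hc i) (abs_nonneg _)

lemma sq_abs_add_le_of_sq_le_of_abs_le {F G S₁ S₂ R₁ R₂ β : ℝ} (hS₁ : 0 ≤ S₁) (hF : F ^ 2 ≤ S₂)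
    (hG : |G| ≤ 2 * R₁ * R₂ * (2 * (β * √(2 * S₁)))) :
    |F + G| ^ 2 ≤ max (64 * β ^ 2 * R₁ ^ 2 * R₂ ^ 2) 2 * (S₁ + S₂) := by
  have hG_sq : G ^ 2 ≤ 32 * β ^ 2 * R₁ ^ 2 * R₂ ^ 2 * S₁ := by
    have hsqrt : √(2 * S₁) ^ 2 = 2 * S₁ := sq_sqrt (by positivity)
    calc G ^ 2 = |G| ^ 2 := (sq_abs G).symm
      _ ≤ (2 * R₁ * R₂ * (2 * (β * √(2 * S₁)))) ^ 2 := pow_le_pow_left₀ (abs_nonneg G) hG 2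
      _ = 32 * β ^ 2 * R₁ ^ 2 * R₂ ^ 2 * S₁ := by
        linear_combination (16 * β ^ 2 * R₁ ^ 2 * R₂ ^ 2) * hsqrt
  calc |F + G| ^ 2 = (F + G) ^ 2 := sq_abs _
    _ ≤ 2 * (F ^ 2 + G ^ 2) := add_sq_le
    _ ≤ 64 * β ^ 2 * R₁ ^ 2 * R₂ ^ 2 * S₁ + 2 * S₂ := by linarith
    _ ≤ max (64 * β ^ 2 * R₁ ^ 2 * R₂ ^ 2) 2 * (S₁ + S₂) := by
        rw [mul_add]
        exact add_le_add (mul_le_mul_of_nonneg_right (le_max_left _ _) hS₁)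
          (mul_le_mul_of_nonneg_right (le_max_right _ _) ((sq_nonneg F).trans hF))

end Sums

section Gap

variable {X Y A H : Type*} [Fintype A] [NormedAddCommGroup H] [InnerProductSpace ℝ H]

lemma gap_sub_gap (β : ℝ) (φ : Y → H) (p : X → H) (r₁ r₁' r₂ r₂' : A → H) (x : X) (y : Y) :
    gap β φ p r₁ r₁' (x, y) - gap β φ p r₂ r₂' (x, y)
      = ∑ a, softmax (fun a => -β * ⟪r₁' a, p x⟫) a * ⟪r₁ a - r₂ a, φ y - p x⟫
        + ∑ a, ⟪r₂ a, φ y - p x⟫ *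
            (softmax (fun a => -β * ⟪r₁' a, p x⟫) a - softmax (fun a => -β * ⟪r₂' a, p x⟫) a) := by
  simp only [gap, softmax]
  rw [← sum_sub_distrib, ← sum_add_distrib]
  exact sum_congr rfl fun a _ => by rw [inner_sub_left]; ring

lemma abs_inner_sub_le {R₁ R₂ : ℝ} {r u v : H} (hr : ‖r‖ ≤ R₁) (hu : ‖u‖ ≤ R₂) (hv : ‖v‖ ≤ R₂) :
    |⟪r, u - v⟫| ≤ 2 * R₁ * R₂ :=
  calc |⟪r, u - v⟫| ≤ ‖r‖ * ‖u - v‖ := abs_real_inner_le_norm _ _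
    _ ≤ R₁ * (R₂ + R₂) :=
        mul_le_mul hr ((norm_sub_le _ _).trans (add_le_add hu hv)) (norm_nonneg _)
          ((norm_nonneg _).trans hr)
    _ = 2 * R₁ * R₂ := by ring

lemma sum_abs_softmax_inner_sub_le [Nonempty A] {β : ℝ} (hβ : 0 ≤ β) (q : H) (r r' : A → H) :
    ∑ a, |softmax (fun a => -β * ⟪r a, q⟫) a - softmax (fun a => -β * ⟪r' a, q⟫) a|
      ≤ 2 * (β * √(2 * ∑ a, ⟪r a - r' a, q⟫ ^ 2)) := by
  refine sum_abs_softmax_sub_le _ _ fun a b => ?_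
  have := mul_le_mul_of_nonneg_left (sub_le_sqrt_two_mul_sum_sq (fun a => ⟪r a - r' a, q⟫) b a) hβ
  rw [inner_sub_left, inner_sub_left] at this
  linarith

end Gap

theorem stmt14_general {X Y A H : Type*}
    [Fintype A] [Nonempty A]
    [NormedAddCommGroup H] [InnerProductSpace ℝ H]
    (R₁ R₂ β : ℝ) (hβ : 0 < β)
    (φ : Y → H) (hφ : ∀ y, ‖φ y‖ ≤ R₂)
    (p : X → H) (hp : ∀ x, ‖p x‖ ≤ R₂)
    (r₁ r₁' r₂ r₂' : A → H)
    (h₂ : ∀ a, ‖r₂ a‖ ≤ R₁)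
    (x : X) (y : Y) :
    |gap β φ p r₁ r₁' (x, y) - gap β φ p r₂ r₂' (x, y)| ^ 2
      ≤ max (64 * β ^ 2 * R₁ ^ 2 * R₂ ^ 2) 2 *
          ((∑ a, ⟪r₁' a - r₂' a, p x⟫ ^ 2) + ∑ a, ⟪r₁ a - r₂ a, φ y - p x⟫ ^ 2) := by
  have hinner_le : ∀ a, |⟪r₂ a, φ y - p x⟫| ≤ 2 * R₁ * R₂ :=
    fun a => abs_inner_sub_le (h₂ a) (hφ y) (hp x)
  have hfirst := sq_sum_mul_le_sum_sq
    (softmax_mem_stdSimplex fun a => -β * ⟪r₁' a, p x⟫) fun a => ⟪r₁ a - r₂ a, φ y - p x⟫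
  have hsecond := (abs_sum_mul_le hinner_le _).trans <| mul_le_mul_of_nonneg_left
    (sum_abs_softmax_inner_sub_le hβ.le (p x) r₁' r₂')
    ((abs_nonneg _).trans (hinner_le (Classical.arbitrary A)))
  rw [gap_sub_gap]
  exact sq_abs_add_le_of_sq_le_of_abs_le (sum_nonneg fun a _ => sq_nonneg _) hfirst hsecond

/-- **Lemma B.6** (pointwise comparison of gap functions). -/
theorem stmt14 {X Y A H : Type*} [MeasurableSpace X] [MeasurableSpace Y]
    [Fintype A] [Nonempty A]
    [NormedAddCommGroup H] [InnerProductSpace ℝ H]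
    (R₁ R₂ β : ℝ) (hR₁ : 0 < R₁) (hR₂ : 0 < R₂) (hβ : 0 < β)
    (φ : Y → H) (hφ : ∀ y, ‖φ y‖ ≤ R₂)
    (p : X → H) (hp : ∀ x, ‖p x‖ ≤ R₂)
    (r₁ r₁' r₂ r₂' : A → H)
    (h₁ : ∀ a, ‖r₁ a‖ ≤ R₁) (h₁' : ∀ a, ‖r₁' a‖ ≤ R₁)
    (h₂ : ∀ a, ‖r₂ a‖ ≤ R₁) (h₂' : ∀ a, ‖r₂' a‖ ≤ R₁)
    (x : X) (y : Y) :
    |gap β φ p r₁ r₁' (x, y) - gap β φ p r₂ r₂' (x, y)| ^ 2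
      ≤ max (64 * β ^ 2 * R₁ ^ 2 * R₂ ^ 2) 2 *
          ((∑ a, ⟪r₁' a - r₂' a, p x⟫ ^ 2) + ∑ a, ⟪r₁ a - r₂ a, φ y - p x⟫ ^ 2) :=
  stmt14_general R₁ R₂ β hβ φ hφ p hp r₁ r₁' r₂ r₂' h₂ x y
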